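/- arXiv:1207.6793 — 4 statements merged into one kernel-verified Lean document; each statement's English description precedes it below -/
import Mathlib

section
/- Define the Bessel kernel J_s(x,y) = (√x·J_{s+1}(√x)·J_s(√y) − √y·J_{s+1}(√y)·J_s(√x)) / (2(x−y)) for x ≠ y, x,y > 0. Then J_s(x,y) = J_{s+2}(x,y) + ((s+1)/√(xy))·J_{s+1}(√x)·J_{s+1}(√y). -/
/-- The Bessel function of the first kind of real order `s`, defined by its
power series. -/
noncomputable def besselJ (s x : ℝ) : ℝ :=
  ∑' m : ℕ, ((-1 : ℝ) ^ m / (m.factorial * Real.Gamma ((m : ℝ) + s + 1)))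
      * (x / 2) ^ (2 * m) * (x / 2) ^ s

/-- The Bessel kernel
`J_s(x,y) = (√x J_{s+1}(√x) J_s(√y) − √y J_{s+1}(√y) J_s(√x)) / (2(x−y))`. -/
noncomputable def besselKernel (s x y : ℝ) : ℝ :=
  (Real.sqrt x * besselJ (s + 1) (Real.sqrt x) * besselJ s (Real.sqrt y)
      - Real.sqrt y * besselJ (s + 1) (Real.sqrt y) * besselJ s (Real.sqrt x))
    / (2 * (x - y))

/-!
The three-term recurrence `J_s(z) + J_{s+2}(z) = (2(s+1)/z) J_{s+1}(z)` holds coefficientwise on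
the power series in `w = (z/2)²`, where it reduces to `1/Γ(t) = t/Γ(t+1)`. For the numerator
`N_s = a J_{s+1}(a) J_s(b) − b J_{s+1}(b) J_s(a)` of the kernel (`a = √x`, `b = √y`), the
recurrence at order `s+1` collapses `N_{s+2}` to
`b J_{s+1}(b) J_{s+2}(a) − a J_{s+1}(a) J_{s+2}(b)`, and the recurrence at order `s` then gives
`N_s − N_{s+2} = 2(s+1)(a² − b²)/(ab) · J_{s+1}(a) J_{s+1}(b)`.
-/

theorem Real.one_div_Gamma_eq_self_mul_one_div_Gamma_add_one (t : ℝ) :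
    (Real.Gamma t)⁻¹ = t * (Real.Gamma (t + 1))⁻¹ := by
  rcases ne_or_eq t 0 with h | rfl
  · rw [Real.Gamma_add_one h, mul_inv, mul_inv_cancel_left₀ h]
  · rw [zero_add, Real.Gamma_zero, inv_zero, zero_mul]

noncomputable def besselTerm (s w : ℝ) (m : ℕ) : ℝ :=
  ((-1 : ℝ) ^ m / (m.factorial * Real.Gamma ((m : ℝ) + s + 1))) * w ^ m

lemma besselJ_eq_tsum_besselTerm (s z : ℝ) :
    besselJ s z = (∑' m, besselTerm s ((z / 2) ^ 2) m) * (z / 2) ^ s := by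
  simp only [besselJ, besselTerm, ← tsum_mul_right, ← pow_mul]

lemma besselTerm_zero_recurrence (s w : ℝ) :
    (s + 1) * besselTerm (s + 1) w 0 = besselTerm s w 0 := by
  simp only [besselTerm, Nat.cast_zero, Nat.factorial_zero, Nat.cast_one, pow_zero, one_div,
    zero_add, one_mul, mul_one, Real.one_div_Gamma_eq_self_mul_one_div_Gamma_add_one (s + 1)]

lemma besselTerm_succ_recurrence (s w : ℝ) (k : ℕ) :
    (s + 1) * besselTerm (s + 1) w (k + 1)
      = besselTerm s w (k + 1) + w * besselTerm (s + 2) w k := by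
  have hΓ := Real.one_div_Gamma_eq_self_mul_one_div_Gamma_add_one ((k : ℝ) + s + 2)
  simp only [besselTerm, div_eq_mul_inv, mul_inv, Nat.factorial_succ]
  push_cast
  rw [show (k + 1 : ℝ) + (s + 1) + 1 = k + s + 2 + 1 by ring,
    show (k + 1 : ℝ) + s + 1 = k + s + 2 by ring,
    show (k : ℝ) + (s + 2) + 1 = k + s + 2 + 1 by ring, hΓ]
  field_simp
  ring

lemma one_le_Gamma_of_two_le {t : ℝ} (ht : 2 ≤ t) : 1 ≤ Real.Gamma t := by
  simpa [Real.Gamma_two] using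
    Real.Gamma_strictMonoOn_Ici.monotoneOn (by norm_num : (2 : ℝ) ∈ Set.Ici 2)
      (le_trans (by norm_num) ht : t ∈ Set.Ici 2) ht

lemma summable_besselTerm (s w : ℝ) : Summable (besselTerm s w) := by
  refine Summable.of_norm_bounded_eventually_nat (Real.summable_pow_div_factorial |w|) ?_
  filter_upwards [Filter.eventually_ge_atTop ⌈1 - s⌉₊] with m hm
  have hΓ : 1 ≤ Real.Gamma ((m : ℝ) + s + 1) :=
    one_le_Gamma_of_two_le (by linarith [(Nat.ceil_le.1 hm : 1 - s ≤ m)])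
  have hm! : (0 : ℝ) < m.factorial := by positivity
  rw [besselTerm, norm_mul, norm_div, norm_pow, norm_neg, norm_one, one_pow, norm_pow,
    Real.norm_of_nonneg (mul_pos hm! (one_pos.trans_le hΓ)).le, Real.norm_eq_abs,
    div_mul_eq_mul_div, one_mul]
  exact div_le_div_of_nonneg_left (by positivity) hm! (le_mul_of_one_le_right hm!.le hΓ)

lemma tsum_besselTerm_recurrence (s w : ℝ) :
    (s + 1) * ∑' m, besselTerm (s + 1) w m
      = ∑' m, besselTerm s w m + w * ∑' m, besselTerm (s + 2) w m := by
  rw [← tsum_mul_left, (summable_besselTerm (s + 1) w).mul_left _ |>.tsum_eq_zero_add,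
    (summable_besselTerm s w).tsum_eq_zero_add, ← tsum_mul_left]
  simp only [besselTerm_zero_recurrence, besselTerm_succ_recurrence]
  rw [((summable_nat_add_iff 1).2 (summable_besselTerm s w)).tsum_add
    ((summable_besselTerm _ w).mul_left w)]
  ring

lemma besselJ_add_two (s : ℝ) {z : ℝ} (hz : 0 < z) :
    besselJ (s + 2) z = 2 * (s + 1) / z * besselJ (s + 1) z - besselJ s z := by
  have hsum := tsum_besselTerm_recurrence s ((z / 2) ^ 2)
  rw [besselJ_eq_tsum_besselTerm, besselJ_eq_tsum_besselTerm, besselJ_eq_tsum_besselTerm,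
    Real.rpow_add (by positivity), Real.rpow_add (by positivity), Real.rpow_one, Real.rpow_two]
  generalize ∑' m, besselTerm s ((z / 2) ^ 2) m = S₀ at *
  generalize ∑' m, besselTerm (s + 1) ((z / 2) ^ 2) m = S₁ at *
  generalize ∑' m, besselTerm (s + 2) ((z / 2) ^ 2) m = S₂ at *
  field_simp
  linear_combination (-4) * hsum

noncomputable def besselKernelNumerator (s a b : ℝ) : ℝ :=
  a * besselJ (s + 1) a * besselJ s b - b * besselJ (s + 1) b * besselJ s a

lemma besselKernel_eq_numerator_div (s x y : ℝ) :
    besselKernel s x y = besselKernelNumerator s (Real.sqrt x) (Real.sqrt y) / (2 * (x - y)) :=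
  rfl

lemma besselKernelNumerator_add_two (s : ℝ) {a b : ℝ} (ha : 0 < a) (hb : 0 < b) :
    besselKernelNumerator (s + 2) a b
      = b * besselJ (s + 1) b * besselJ (s + 2) a - a * besselJ (s + 1) a * besselJ (s + 2) b := by
  have hJ (z : ℝ) (hz : 0 < z) :
      besselJ (s + 2 + 1) z = 2 * (s + 2) / z * besselJ (s + 2) z - besselJ (s + 1) z := by
    rw [show s + 2 + 1 = s + 1 + 2 by ring, besselJ_add_two (s + 1) hz,
      show s + 1 + 1 = s + 2 by ring]
  rw [besselKernelNumerator, hJ a ha, hJ b hb]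
  field_simp
  ring

lemma besselKernelNumerator_sub_add_two (s : ℝ) {a b : ℝ} (ha : 0 < a) (hb : 0 < b) :
    besselKernelNumerator s a b - besselKernelNumerator (s + 2) a b
      = 2 * (s + 1) * (a ^ 2 - b ^ 2) / (a * b) * besselJ (s + 1) a * besselJ (s + 1) b := by
  rw [besselKernelNumerator_add_two s ha hb, besselJ_add_two s ha, besselJ_add_two s hb,
    besselKernelNumerator]
  field_simp
  ring

theorem besselKernel_recurrence (s x y : ℝ) (hx : 0 < x) (hy : 0 < y) (hxy : x ≠ y) :
    besselKernel s x y = besselKernel (s + 2) x y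
      + ((s + 1) / Real.sqrt (x * y)) * besselJ (s + 1) (Real.sqrt x)
          * besselJ (s + 1) (Real.sqrt y) := by
  have hN := besselKernelNumerator_sub_add_two s (Real.sqrt_pos.2 hx) (Real.sqrt_pos.2 hy)
  rw [Real.sq_sqrt hx.le, Real.sq_sqrt hy.le, ← Real.sqrt_mul hx.le] at hN
  have hsub : x - y ≠ 0 := sub_ne_zero.2 hxy
  have hsqrt : Real.sqrt (x * y) ≠ 0 := (Real.sqrt_pos.2 (mul_pos hx hy)).ne'
  rw [besselKernel_eq_numerator_div, besselKernel_eq_numerator_div, sub_eq_iff_eq_add'.1 hN]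
  field_simp
end

section
/- Let Q be the orthogonal projection onto a closed subspace L of L²(E,μ), and let g be a bounded nonnegative measurable function on E such that the operator 1 + (g−1)Q is invertible. Then the operator B̃(g,Q) = √g · Q · (1+(g−1)Q)^{−1} · √g is the orthogonal projection onto the closure of the subspace √g·L. -/
open MeasureTheory

/-- If `Q` is the orthogonal projection onto a closed subspace `L` of `L²(E,μ)` and `g` is a
bounded nonnegative measurable function such that `1 + (g-1)Q` is invertible, then
`B̃(g,Q) = √g Q (1+(g-1)Q)⁻¹ √g` is the orthogonal projection onto the closure of `√g·L`
(i.e. it is a self-adjoint idempotent with range the closure of `√g·L`). -/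
theorem Btilde_is_projection_onto_closure {E : Type*} [MeasurableSpace E] (μ : Measure E)
    (L : Submodule ℂ (Lp ℂ 2 μ)) (hLclosed : IsClosed (L : Set (Lp ℂ 2 μ)))
    (Q : Lp ℂ 2 μ →L[ℂ] Lp ℂ 2 μ)
    (hQsa : IsSelfAdjoint Q) (hQidem : Q ∘L Q = Q)
    (hQrange : LinearMap.range Q.toLinearMap = L)
    (g : E → ℝ) (hgmeas : Measurable g) (hg0 : ∀ x, 0 ≤ g x) (hgbdd : ∃ M, ∀ x, g x ≤ M)
    (Sg T : Lp ℂ 2 μ →L[ℂ] Lp ℂ 2 μ)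
    (hSg : ∀ f : Lp ℂ 2 μ, (Sg f : E → ℂ) =ᵐ[μ] fun x => (Real.sqrt (g x) : ℂ) * f x)
    (hT : ∀ f : Lp ℂ 2 μ, (T f : E → ℂ) =ᵐ[μ] fun x => ((g x : ℂ) - 1) * f x)
    (hinv : IsUnit (1 + T ∘L Q)) :
    let B := Sg ∘L Q ∘L Ring.inverse (1 + T ∘L Q) ∘L Sg
    IsSelfAdjoint B ∧ B ∘L B = B ∧
      LinearMap.range B.toLinearMap = (Submodule.map Sg.toLinearMap L).topologicalClosure := by
  intro B
  -- Sg is self-adjoint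
  have hSg_sa : IsSelfAdjoint Sg := by
    rw [ContinuousLinearMap.isSelfAdjoint_iff_isSymmetric]
    intro x y
    rw [L2.inner_def, L2.inner_def]
    apply integral_congr_ae
    filter_upwards [hSg x, hSg y] with a h1 h2
    simp only [ContinuousLinearMap.coe_coe, RCLike.inner_apply, h1, h2, map_mul,
      Complex.conj_ofReal]
    ring
  -- Sg ∘ Sg = 1 + T
  have hSgSg : Sg ∘L Sg = 1 + T := by
    ext f
    filter_upwards [hSg (Sg f), hSg f, hT f, Lp.coeFn_add f (T f)] with a e1 e2 e3 e4
    simp only [ContinuousLinearMap.comp_apply, ContinuousLinearMap.add_apply,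
      ContinuousLinearMap.one_apply] at *
    rw [e1, e2, e4]
    simp only [Pi.add_apply, e3]
    rw [← mul_assoc, ← Complex.ofReal_mul, Real.mul_self_sqrt (hg0 a)]
    ring
  -- pass to the ring structure
  have h1T : Sg * Sg = 1 + T := hSgSg
  have hQQ : Q * Q = Q := hQidem
  have hTsa : star T = T := by
    have hTe : T = Sg * Sg - 1 := by rw [h1T]; abel
    rw [hTe]
    simp [star_sub, hSg_sa.star_eq]
  set D : Lp ℂ 2 μ →L[ℂ] Lp ℂ 2 μ := 1 + T ∘L Q with hD
  have hDmul : D = 1 + T * Q := rfl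
  set A : Lp ℂ 2 μ →L[ℂ] Lp ℂ 2 μ := Ring.inverse D with hA
  have hAD : A * D = 1 := Ring.inverse_mul_cancel D hinv
  have hDA : D * A = 1 := Ring.mul_inverse_cancel D hinv
  have hBmul : B = Sg * (Q * (A * Sg)) := rfl
  -- key identity : A * (Sg * (Sg * Q)) = Q
  have key1 : A * (Sg * (Sg * Q)) = Q := by
    have hDQ : Sg * (Sg * Q) = D * Q := by
      rw [← mul_assoc, h1T, hDmul, add_mul, add_mul, one_mul, mul_assoc T Q Q, hQQ]
    rw [hDQ, ← mul_assoc, hAD, one_mul]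
  have key1X : ∀ X : Lp ℂ 2 μ →L[ℂ] Lp ℂ 2 μ,
      A * (Sg * (Sg * (Q * X))) = Q * X := by
    intro X
    have := congrArg (· * X) key1
    simpa only [mul_assoc] using this
  -- star A * Q = Q * A
  have hstarDQ : star D * Q = Q * D := by
    rw [hDmul]
    simp only [star_add, star_one, star_mul, hTsa, hQsa.star_eq]
    rw [add_mul, mul_add, one_mul, mul_one, mul_assoc]
  have hstarA_D : star A * star D = 1 := by rw [← star_mul, hDA, star_one]
  have key3 : star A * Q = Q * A := by
    calc star A * Q = star A * (Q * D * A) := by rw [mul_assoc, hDA, mul_one]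
      _ = star A * (star D * Q * A) := by rw [hstarDQ]
      _ = star A * star D * (Q * A) := by simp only [mul_assoc]
      _ = Q * A := by rw [hstarA_D, one_mul]
  -- self-adjointness of B
  have hBsa : IsSelfAdjoint B := by
    show star B = B
    rw [hBmul]
    simp only [star_mul, hSg_sa.star_eq, hQsa.star_eq]
    rw [mul_assoc Sg (star A) Q, key3]
    simp only [mul_assoc]
  -- idempotency of B
  have hBB : B ∘L B = B := by
    show B * B = B
    rw [hBmul]
    simp only [mul_assoc]
    rw [key1X (A * Sg), ← mul_assoc Q Q, hQQ]
  -- B fixes Sg ∘ Q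
  have keyrange : B * (Sg * Q) = Sg * Q := by
    rw [hBmul]
    simp only [mul_assoc]
    rw [key1, hQQ]
  refine ⟨hBsa, hBB, ?_⟩
  -- range of B is closed
  have hcl : IsClosed (LinearMap.range B.toLinearMap : Set (Lp ℂ 2 μ)) := by
    have hset : (LinearMap.range B.toLinearMap : Set (Lp ℂ 2 μ)) = {x | B x = x} := by
      ext x
      constructor
      · rintro ⟨y, rfl⟩
        show B (B y) = B y
        rw [← ContinuousLinearMap.comp_apply, hBB]
      · intro h
        exact ⟨x, h⟩
    rw [hset]
    exact isClosed_eq B.continuous continuous_id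
  apply le_antisymm
  · rintro x ⟨y, rfl⟩
    apply Submodule.le_topologicalClosure
    refine ⟨Q (Ring.inverse (1 + T ∘L Q) (Sg y)), ?_, rfl⟩
    rw [← hQrange]
    exact ⟨_, rfl⟩
  · refine Submodule.topologicalClosure_minimal (s := Submodule.map Sg.toLinearMap L) ?_ hcl
    rintro _ ⟨f, hf, rfl⟩
    rw [← hQrange] at hf
    obtain ⟨y, rfl⟩ := hf
    refine ⟨Sg (Q y), ?_⟩
    have := congrArg (fun (M : Lp ℂ 2 μ →L[ℂ] Lp ℂ 2 μ) => M y) keyrange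
    exact this
end

section
/- The set 𝓘_ξ(E,μ) of Hilbert–Schmidt operators K on L²(E,μ) satisfying Σₙ ‖χ_{Eₙ}Kχ_{Eₙ}‖_{𝓘₁} < ∞, equipped with the norm ‖K‖_{𝓘_ξ} = ‖K‖_{𝓘₂} + Σₙ ‖χ_{Eₙ}Kχ_{Eₙ}‖_{𝓘₁}, is closed under operator composition (i.e., is an algebra). -/
open MeasureTheory
open scoped ENNReal

/-- The trace norm of an operator (finite iff the operator is trace class). -/
noncomputable def traceNorm {H : Type*} [NormedAddCommGroup H] [InnerProductSpace ℂ H]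
    (T : H →L[ℂ] H) : ℝ≥0∞ :=
  ⨆ (n : ℕ) (e : Fin n → H) (f : Fin n → H) (_ : Orthonormal ℂ e) (_ : Orthonormal ℂ f),
    ∑ i, (‖(inner ℂ (e i) (T (f i)) : ℂ)‖₊ : ℝ≥0∞)

/-- `T` is a Hilbert–Schmidt operator. -/
def IsHilbertSchmidt {H : Type*} [NormedAddCommGroup H] [InnerProductSpace ℂ H]
    (b : HilbertBasis ℕ ℂ H) (T : H →L[ℂ] H) : Prop :=
  Summable fun i : ℕ => ‖T (b i)‖ ^ 2

/-- Membership in the class `𝓘_ξ(E,μ)`: Hilbert–Schmidt with summable trace norms of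
the diagonal blocks `χ_{Eₙ} T χ_{Eₙ}`. -/
def memIxi {H : Type*} [NormedAddCommGroup H] [InnerProductSpace ℂ H]
    (b : HilbertBasis ℕ ℂ H) (chi : ℕ → (H →L[ℂ] H)) (T : H →L[ℂ] H) : Prop :=
  IsHilbertSchmidt b T ∧ (∑' n : ℕ, traceNorm (chi n ∘L T ∘L chi n)) < ⊤

/-!
Each diagonal block factors as `χₙ K₁ K₂ χₙ = (χₙ K₁)(K₂ χₙ)`, and a product `C D` of
Hilbert–Schmidt operators is trace class with `‖C D‖₁ ≤ ‖C‖₂² + ‖D‖₂²`, because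
`|⟪e, C D f⟫| ≤ ‖C* e‖ ‖D f‖ ≤ ‖C* e‖² + ‖D f‖²` and `∑ᵢ ‖A eᵢ‖² ≤ ‖A‖₂²` for every orthonormal
family. As the `χₙ` are self-adjoint, `‖K₂ χₙ‖₂ = ‖χₙ K₂*‖₂`, and as `∑ₙ ‖χₙ g‖² ≤ ‖g‖²`,
summing over `n` gives `∑ₙ ‖χₙ K₁ K₂ χₙ‖₁ ≤ ‖K₁‖₂² + ‖K₂*‖₂² = ‖K₁‖₂² + ‖K₂‖₂²`.
The Hilbert–Schmidt part holds since Hilbert–Schmidt operators form a left ideal.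
-/

open ContinuousLinearMap
open scoped InnerProductSpace

theorem ENNReal.mul_le_sq_add_sq (a c : ℝ≥0∞) : a * c ≤ a ^ 2 + c ^ 2 := by
  rcases le_total a c with h | h
  · calc a * c ≤ c ^ 2 := by rw [sq]; exact mul_le_mul_left h c
      _ ≤ a ^ 2 + c ^ 2 := le_add_self
  · calc a * c ≤ a ^ 2 := by rw [sq]; exact mul_le_mul_right h a
      _ ≤ a ^ 2 + c ^ 2 := le_self_add

section HilbertSchmidt

variable {ι κ 𝕜 H : Type*} [RCLike 𝕜] [NormedAddCommGroup H] [InnerProductSpace 𝕜 H]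

theorem HilbertBasis.enorm_sq_eq_tsum_enorm_inner_sq (b : HilbertBasis ι 𝕜 H) (x : H) :
    ‖x‖ₑ ^ 2 = ∑' i, ‖⟪b i, x⟫_𝕜‖ₑ ^ 2 := by
  have h := lp.hasSum_norm (p := 2) (by norm_num) (b.repr x)
  simp only [ENNReal.toReal_ofNat, Real.rpow_two, b.repr_apply_apply,
    LinearIsometryEquiv.norm_map] at h
  simp only [← ofReal_norm, ← ENNReal.ofReal_pow (norm_nonneg _)]
  rw [← ENNReal.ofReal_tsum_of_nonneg (fun _ => by positivity) h.summable, h.tsum_eq]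

theorem Orthonormal.sum_enorm_inner_sq_le {e : κ → H} (he : Orthonormal 𝕜 e) (s : Finset κ)
    (x : H) : ∑ i ∈ s, ‖⟪e i, x⟫_𝕜‖ₑ ^ 2 ≤ ‖x‖ₑ ^ 2 := by
  simp only [← ofReal_norm, ← ENNReal.ofReal_pow (norm_nonneg _)]
  rw [← ENNReal.ofReal_sum_of_nonneg (fun _ _ => by positivity)]
  exact ENNReal.ofReal_le_ofReal (he.sum_inner_products_le x)

noncomputable def hilbertSchmidtSq (b : HilbertBasis ι 𝕜 H) (A : H →L[𝕜] H) : ℝ≥0∞ :=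
  ∑' i, ‖A (b i)‖ₑ ^ 2

variable (b : HilbertBasis ι 𝕜 H)

theorem hilbertSchmidtSq_eq_tsum_tsum (A : H →L[𝕜] H) :
    hilbertSchmidtSq b A = ∑' i, ∑' j, ‖⟪b j, A (b i)⟫_𝕜‖ₑ ^ 2 :=
  tsum_congr fun i => b.enorm_sq_eq_tsum_enorm_inner_sq (A (b i))

theorem hilbertSchmidtSq_comp_le (A B : H →L[𝕜] H) :
    hilbertSchmidtSq b (A ∘L B) ≤ ‖A‖ₑ ^ 2 * hilbertSchmidtSq b B := by
  rw [hilbertSchmidtSq, hilbertSchmidtSq, ← ENNReal.tsum_mul_left]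
  refine ENNReal.tsum_le_tsum fun i => ?_
  rw [← mul_pow]
  exact pow_le_pow_left' (A.le_opENorm _) 2

theorem tsum_hilbertSchmidtSq_comp_le {P : κ → H →L[𝕜] H}
    (hP : ∀ x, ∑' n, ‖P n x‖ₑ ^ 2 ≤ ‖x‖ₑ ^ 2) (A : H →L[𝕜] H) :
    ∑' n, hilbertSchmidtSq b (P n ∘L A) ≤ hilbertSchmidtSq b A := by
  simp only [hilbertSchmidtSq, comp_apply]
  rw [ENNReal.tsum_comm]
  exact ENNReal.tsum_le_tsum fun i => hP (A (b i))

variable [CompleteSpace H]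

theorem enorm_inner_adjoint (A : H →L[𝕜] H) (x y : H) :
    ‖⟪x, adjoint A y⟫_𝕜‖ₑ = ‖⟪y, A x⟫_𝕜‖ₑ := by
  rw [adjoint_inner_right, ← inner_conj_symm, RCLike.enorm_conj]

@[simp]
theorem hilbertSchmidtSq_adjoint (A : H →L[𝕜] H) :
    hilbertSchmidtSq b (adjoint A) = hilbertSchmidtSq b A := by
  simp only [hilbertSchmidtSq_eq_tsum_tsum, enorm_inner_adjoint]
  exact ENNReal.tsum_comm

theorem Orthonormal.sum_enorm_apply_sq_le_hilbertSchmidtSq {e : κ → H} (he : Orthonormal 𝕜 e)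
    (s : Finset κ) (A : H →L[𝕜] H) :
    ∑ i ∈ s, ‖A (e i)‖ₑ ^ 2 ≤ hilbertSchmidtSq b A := by
  calc ∑ i ∈ s, ‖A (e i)‖ₑ ^ 2
      = ∑ i ∈ s, ∑' j, ‖⟪e i, adjoint A (b j)⟫_𝕜‖ₑ ^ 2 := by
        simp only [b.enorm_sq_eq_tsum_enorm_inner_sq, enorm_inner_adjoint]
    _ = ∑' j, ∑ i ∈ s, ‖⟪e i, adjoint A (b j)⟫_𝕜‖ₑ ^ 2 :=
        (Summable.tsum_finsetSum fun _ _ => ENNReal.summable).symm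
    _ ≤ ∑' j, ‖adjoint A (b j)‖ₑ ^ 2 :=
        ENNReal.tsum_le_tsum fun j => he.sum_enorm_inner_sq_le s _
    _ = hilbertSchmidtSq b A := hilbertSchmidtSq_adjoint b A

end HilbertSchmidt

section TraceNorm

variable {ι κ H : Type*} [NormedAddCommGroup H] [InnerProductSpace ℂ H] [CompleteSpace H]
  (b : HilbertBasis ι ℂ H)

theorem traceNorm_comp_le (A B : H →L[ℂ] H) :
    traceNorm (A ∘L B) ≤ hilbertSchmidtSq b A + hilbertSchmidtSq b B := by
  refine iSup_le fun m => iSup_le fun e => iSup_le fun f => iSup_le fun he => iSup_le fun hf => ?_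
  have hterm : ∀ i, (‖⟪e i, A (B (f i))⟫_ℂ‖₊ : ℝ≥0∞) ≤ ‖adjoint A (e i)‖ₑ ^ 2 + ‖B (f i)‖ₑ ^ 2 :=
    fun i => by
      rw [← adjoint_inner_left]
      exact (ENNReal.coe_le_coe.mpr (nnnorm_inner_le_nnnorm _ _)).trans
        (ENNReal.mul_le_sq_add_sq _ _)
  calc ∑ i, (‖⟪e i, (A ∘L B) (f i)⟫_ℂ‖₊ : ℝ≥0∞)
      ≤ ∑ i, ‖adjoint A (e i)‖ₑ ^ 2 + ∑ i, ‖B (f i)‖ₑ ^ 2 := by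
        rw [← Finset.sum_add_distrib]
        exact Finset.sum_le_sum fun i _ => hterm i
    _ ≤ hilbertSchmidtSq b (adjoint A) + hilbertSchmidtSq b B :=
        add_le_add (he.sum_enorm_apply_sq_le_hilbertSchmidtSq b _ _)
          (hf.sum_enorm_apply_sq_le_hilbertSchmidtSq b _ _)
    _ = hilbertSchmidtSq b A + hilbertSchmidtSq b B := by rw [hilbertSchmidtSq_adjoint]

theorem tsum_traceNorm_compress_comp_le {P : κ → H →L[ℂ] H} (hPsa : ∀ n, IsSelfAdjoint (P n))
    (hP : ∀ x, ∑' n, ‖P n x‖ₑ ^ 2 ≤ ‖x‖ₑ ^ 2) (A B : H →L[ℂ] H) :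
    ∑' n, traceNorm (P n ∘L (A ∘L B) ∘L P n) ≤ hilbertSchmidtSq b A + hilbertSchmidtSq b B := by
  have hblock : ∀ n, traceNorm (P n ∘L (A ∘L B) ∘L P n)
      ≤ hilbertSchmidtSq b (P n ∘L A) + hilbertSchmidtSq b (P n ∘L adjoint B) := fun n => by
    have hadj : adjoint (B ∘L P n) = P n ∘L adjoint B := by
      rw [adjoint_comp, (hPsa n).adjoint_eq]
    have h := traceNorm_comp_le b (P n ∘L A) (B ∘L P n)
    rw [← hilbertSchmidtSq_adjoint b (B ∘L P n), hadj] at h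
    exact h
  calc ∑' n, traceNorm (P n ∘L (A ∘L B) ∘L P n)
      ≤ ∑' n, hilbertSchmidtSq b (P n ∘L A) + ∑' n, hilbertSchmidtSq b (P n ∘L adjoint B) := by
        rw [← ENNReal.tsum_add]
        exact ENNReal.tsum_le_tsum hblock
    _ ≤ hilbertSchmidtSq b A + hilbertSchmidtSq b B := by
        rw [← hilbertSchmidtSq_adjoint b B]
        exact add_le_add (tsum_hilbertSchmidtSq_comp_le b hP A)
          (tsum_hilbertSchmidtSq_comp_le b hP _)

end TraceNorm

theorem isHilbertSchmidt_iff_hilbertSchmidtSq_ne_top {H : Type*} [NormedAddCommGroup H]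
    [InnerProductSpace ℂ H] (b : HilbertBasis ℕ ℂ H) (T : H →L[ℂ] H) :
    IsHilbertSchmidt b T ↔ hilbertSchmidtSq b T ≠ ⊤ := by
  simp only [IsHilbertSchmidt, hilbertSchmidtSq, enorm_eq_nnnorm, ← ENNReal.coe_pow,
    ENNReal.tsum_coe_ne_top_iff_summable, ← NNReal.summable_coe, NNReal.coe_pow, coe_nnnorm]

theorem IsHilbertSchmidt.clm_comp {H : Type*} [NormedAddCommGroup H] [InnerProductSpace ℂ H]
    [CompleteSpace H] {b : HilbertBasis ℕ ℂ H} {B : H →L[ℂ] H} (hB : IsHilbertSchmidt b B)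
    (A : H →L[ℂ] H) : IsHilbertSchmidt b (A ∘L B) := by
  rw [isHilbertSchmidt_iff_hilbertSchmidtSq_ne_top] at hB ⊢
  exact ne_top_of_le_ne_top (ENNReal.mul_ne_top (ENNReal.pow_ne_top enorm_ne_top) hB)
    (hilbertSchmidtSq_comp_le b A B)

namespace MeasureTheory.L2

variable {α 𝕜 : Type*} [RCLike 𝕜] [MeasurableSpace α] {μ : Measure α}

theorem enorm_sq_eq_lintegral (f : Lp 𝕜 2 μ) : ‖f‖ₑ ^ 2 = ∫⁻ a, ‖f a‖ₑ ^ 2 ∂μ := by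
  have h := eLpNorm_nnreal_pow_eq_lintegral (f := f) (μ := μ) (p := 2) two_ne_zero
  simpa only [NNReal.coe_ofNat, ENNReal.coe_ofNat, ENNReal.rpow_two, ← Lp.enorm_def] using h

theorem isSelfAdjoint_of_ae_eq_indicator {s : Set α} {P : Lp 𝕜 2 μ →L[𝕜] Lp 𝕜 2 μ}
    (hP : ∀ f, P f =ᵐ[μ] s.indicator f) : IsSelfAdjoint P := by
  refine ((ContinuousLinearMap.eq_adjoint_iff P P).mpr fun f g => ?_).symm
  rw [inner_def, inner_def]
  refine integral_congr_ae ?_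
  filter_upwards [hP f, hP g] with a hf hg
  by_cases ha : a ∈ s <;> simp [hf, hg, ha]

theorem tsum_enorm_sq_le_of_ae_eq_indicator {s : ℕ → Set α} (hs : ∀ n, MeasurableSet (s n))
    (hdisj : Pairwise (Function.onFun Disjoint s)) {P : ℕ → Lp 𝕜 2 μ →L[𝕜] Lp 𝕜 2 μ}
    (hP : ∀ n f, P n f =ᵐ[μ] (s n).indicator f) (f : Lp 𝕜 2 μ) :
    ∑' n, ‖P n f‖ₑ ^ 2 ≤ ‖f‖ₑ ^ 2 := by
  have hblock : ∀ n, ‖P n f‖ₑ ^ 2 = ∫⁻ a in s n, ‖f a‖ₑ ^ 2 ∂μ := fun n => by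
    rw [enorm_sq_eq_lintegral, ← lintegral_indicator (hs n)]
    refine lintegral_congr_ae ?_
    filter_upwards [hP n f] with a ha
    by_cases h : a ∈ s n <;> simp [ha, h]
  calc ∑' n, ‖P n f‖ₑ ^ 2 = ∫⁻ a in ⋃ n, s n, ‖f a‖ₑ ^ 2 ∂μ := by
        rw [lintegral_iUnion hs hdisj]
        exact tsum_congr hblock
    _ ≤ ‖f‖ₑ ^ 2 := by
        rw [enorm_sq_eq_lintegral]
        exact setLIntegral_le_lintegral _ _

end MeasureTheory.L2

theorem memIxi_comp_general {E : Type*} [MeasurableSpace E] (μ : Measure E)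
    (b : HilbertBasis ℕ ℂ (Lp ℂ 2 μ))
    (En : ℕ → Set E) (hmeas : ∀ n, MeasurableSet (En n))
    (hdisj : Pairwise (Function.onFun Disjoint En))
    (chi : ℕ → (Lp ℂ 2 μ →L[ℂ] Lp ℂ 2 μ))
    (hchi : ∀ n, ∀ f : Lp ℂ 2 μ, (chi n f : E → ℂ) =ᵐ[μ] (En n).indicator f)
    (K₁ K₂ : Lp ℂ 2 μ →L[ℂ] Lp ℂ 2 μ)
    (h₁ : memIxi b chi K₁) (h₂ : memIxi b chi K₂) :
    memIxi b chi (K₁ ∘L K₂) := by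
  have hsa : ∀ n, IsSelfAdjoint (chi n) := fun n => L2.isSelfAdjoint_of_ae_eq_indicator (hchi n)
  have hproj := L2.tsum_enorm_sq_le_of_ae_eq_indicator hmeas hdisj hchi
  have hs₁ := (isHilbertSchmidt_iff_hilbertSchmidtSq_ne_top b K₁).mp h₁.1
  have hs₂ := (isHilbertSchmidt_iff_hilbertSchmidtSq_ne_top b K₂).mp h₂.1
  refine ⟨h₂.1.clm_comp K₁, ?_⟩
  calc ∑' n, traceNorm (chi n ∘L (K₁ ∘L K₂) ∘L chi n)
      ≤ hilbertSchmidtSq b K₁ + hilbertSchmidtSq b K₂ :=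
        tsum_traceNorm_compress_comp_le b hsa hproj K₁ K₂
    _ < ⊤ := ENNReal.add_lt_top.mpr ⟨hs₁.lt_top, hs₂.lt_top⟩

/-- The class `𝓘_ξ(E,μ)` is closed under operator composition, i.e. it is an algebra. -/
theorem memIxi_comp {E : Type*} [MetricSpace E] [MeasurableSpace E] (μ : Measure E)
    (b : HilbertBasis ℕ ℂ (Lp ℂ 2 μ))
    (En : ℕ → Set E) (hmeas : ∀ n, MeasurableSet (En n))
    (hbdd : ∀ n, Bornology.IsBounded (En n))
    (hdisj : Pairwise (Function.onFun Disjoint En)) (hcover : ⋃ n, En n = Set.univ)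
    (chi : ℕ → (Lp ℂ 2 μ →L[ℂ] Lp ℂ 2 μ))
    (hchi : ∀ n, ∀ f : Lp ℂ 2 μ, (chi n f : E → ℂ) =ᵐ[μ] (En n).indicator f)
    (K₁ K₂ : Lp ℂ 2 μ →L[ℂ] Lp ℂ 2 μ)
    (h₁ : memIxi b chi K₁) (h₂ : memIxi b chi K₂) :
    memIxi b chi (K₁ ∘L K₂) :=
  memIxi_comp_general μ b En hmeas hdisj chi hchi K₁ K₂ h₁ h₂
end

section
/- Let K be a self-adjoint positive contraction on L²(E,μ) that is locally trace class, and let g : E → [0,1] be measurable with √(1−g)·K·√(1−g) trace class. If 1 − √(1−g)K√(1−g) is invertible, then the operator B̃(g,K) = √g·K·(1+(g−1)K)^{−1}·√g is a self-adjoint positive contraction, i.e., 0 ≤ B̃(g,K) ≤ 1. -/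
open MeasureTheory
open scoped ENNReal

/-!
Write `s = √g` and `t = √(1 - g)` as multiplication operators, so that `s² + t² = 1` and
`1 + (g - 1)K = 1 - t²K`, and let `p = √K`. Pushing `p` through the inverse gives
`B̃ = X* N⁻¹ X` with `X = p s` and `N = 1 - p t² p = (1 - K) + X X*`, which is invertible because
`1 - t K t` is. Hence `B̃ ≥ 0`; and since `X X* ≤ N`, the operator `Y = N^{-1/2} X` has
`Y Y* ≤ 1`, so `B̃ = Y* Y ≤ 1` by the C⋆-identity `‖Y* Y‖ = ‖Y Y*‖`.
-/

theorem isUnit_one_sub_mul_comm {R : Type*} [Ring R] {a b : R} :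
    IsUnit (1 - a * b) ↔ IsUnit (1 - b * a) := by
  simpa [spectrum.mem_iff] using
    (spectrum.unit_mem_mul_comm (R := ℤ) (r := 1) (a := a) (b := b)).not

theorem SemiconjBy.ringInverse {M₀ : Type*} [MonoidWithZero M₀] {a x y : M₀}
    (h : SemiconjBy a x y) (hx : IsUnit x) (hy : IsUnit y) :
    SemiconjBy a (Ring.inverse x) (Ring.inverse y) := by
  obtain ⟨x, rfl⟩ := hx
  obtain ⟨y, rfl⟩ := hy
  simpa only [Ring.inverse_unit] using h.units_inv_right

section CStarAlgebra

variable {A : Type*} [CStarAlgebra A] [PartialOrder A] [StarOrderedRing A]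

theorem star_mul_self_le_one_iff (x : A) : star x * x ≤ 1 ↔ x * star x ≤ 1 := by
  rw [← CStarAlgebra.norm_le_one_iff_of_nonneg _ (star_mul_self_nonneg x),
    ← CStarAlgebra.norm_le_one_iff_of_nonneg _ (mul_star_self_nonneg x),
    CStarRing.norm_star_mul_self, CStarRing.norm_self_mul_star]

theorem star_mul_ringInverse_mul_le_one {N X : A} (hN : IsUnit N) (hX : X * star X ≤ N) :
    star X * Ring.inverse N * X ≤ 1 := by
  have hN_pos : IsStrictlyPositive N := hN.isStrictlyPositive ((mul_star_self_nonneg X).trans hX)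
  set r := N ^ (-(1 / 2) : ℝ)
  have hr : IsSelfAdjoint r := .of_nonneg CFC.rpow_nonneg
  have hrr : r * r = Ring.inverse N := by
    rw [← CFC.rpow_add hN, CFC.inverse_eq_rpow_neg_one]
    norm_num
  have hconj : star X * Ring.inverse N * X = star (r * X) * (r * X) := by
    rw [star_mul, hr.star_eq, ← hrr]
    noncomm_ring
  rw [hconj, star_mul_self_le_one_iff]
  calc r * X * star (r * X) = r * (X * star X) * r := by
        rw [star_mul, hr.star_eq]
        noncomm_ring
    _ ≤ r * N * r := hr.conjugate_le_conjugate hX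
    _ = 1 := CFC.conjugate_rpow_neg_one_half N

theorem mul_mul_ringInverse_one_sub_mul_mem_Icc {s t k : A} (hs : IsSelfAdjoint s)
    (hst : s * s + t * t = 1) (hk₀ : 0 ≤ k) (hk₁ : k ≤ 1)
    (hu : IsUnit (1 - t * k * t)) :
    s * k * Ring.inverse (1 - t * t * k) * s ∈ Set.Icc 0 1 := by
  obtain ⟨p, hp, rfl⟩ : ∃ p, IsSelfAdjoint p ∧ p * p = k :=
    ⟨CFC.sqrt k, .of_nonneg (CFC.sqrt_nonneg k), CFC.sqrt_mul_sqrt_self k⟩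
  have hM : IsUnit (1 - t * t * (p * p)) := by
    simpa only [mul_assoc] using isUnit_one_sub_mul_comm.mp (by simpa only [mul_assoc] using hu)
  have hN : IsUnit (1 - p * t * (t * p)) :=
    isUnit_one_sub_mul_comm.mp (by simpa only [mul_assoc] using hu)
  have hXN : p * s * star (p * s) ≤ 1 - p * t * (t * p) := by
    have : 1 - p * t * (t * p) = (1 - p * p) + p * s * star (p * s) := by
      calc 1 - p * t * (t * p) = 1 - p * (t * t) * p := by noncomm_ring
        _ = _ := by rw [eq_sub_of_add_eq' hst, star_mul, hs.star_eq, hp.star_eq]; noncomm_ring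
    rw [this]
    exact le_add_of_nonneg_left (sub_nonneg.mpr hk₁)
  have hintertwine :
      p * Ring.inverse (1 - t * t * (p * p)) = Ring.inverse (1 - p * t * (t * p)) * p :=
    SemiconjBy.ringInverse (by unfold SemiconjBy; noncomm_ring) hM hN
  have hB : s * (p * p) * Ring.inverse (1 - t * t * (p * p)) * s
      = star (p * s) * Ring.inverse (1 - p * t * (t * p)) * (p * s) := by
    calc _ = s * p * (p * Ring.inverse (1 - t * t * (p * p))) * s := by noncomm_ring
      _ = _ := by rw [hintertwine, star_mul, hs.star_eq, hp.star_eq]; noncomm_ring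
  rw [hB]
  exact ⟨star_left_conjugate_nonneg ((CFC.ringInverse_nonneg_iff_nonneg_of_isUnit hN).mpr
    ((mul_star_self_nonneg _).trans hXN)) _, star_mul_ringInverse_mul_le_one hN hXN⟩

end CStarAlgebra

namespace MeasureTheory.Lp

variable {E : Type*} [MeasurableSpace E] {μ : Measure E} {p : ℝ≥0∞} [Fact (1 ≤ p)]

def IsMulOperator (S : Lp ℂ p μ →L[ℂ] Lp ℂ p μ) (c : E → ℂ) : Prop :=
  ∀ f : Lp ℂ p μ, (S f : E → ℂ) =ᵐ[μ] fun x => c x * f x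

namespace IsMulOperator

variable {S S' : Lp ℂ p μ →L[ℂ] Lp ℂ p μ} {c c' : E → ℂ}

theorem one : IsMulOperator (1 : Lp ℂ p μ →L[ℂ] Lp ℂ p μ) 1 :=
  fun f => .of_forall fun x => (one_mul (f x)).symm

theorem mul (hS : IsMulOperator S c) (hS' : IsMulOperator S' c') :
    IsMulOperator (S * S') (c * c') := by
  intro f
  filter_upwards [hS (S' f), hS' f] with x hx hx'
  rw [mul_apply_eq_comp, hx, hx', Pi.mul_apply, mul_assoc]

theorem add (hS : IsMulOperator S c) (hS' : IsMulOperator S' c') :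
    IsMulOperator (S + S') (c + c') := by
  intro f
  filter_upwards [hS f, hS' f, coeFn_add (S f) (S' f)] with x hx hx' hadd
  rw [add_apply, hadd, Pi.add_apply, hx, hx', Pi.add_apply, add_mul]

theorem neg (hS : IsMulOperator S c) : IsMulOperator (-S) (-c) := by
  intro f
  filter_upwards [hS f, coeFn_neg (S f)] with x hx hneg
  rw [neg_apply, hneg, Pi.neg_apply, hx, Pi.neg_apply, neg_mul]

theorem eq (hS : IsMulOperator S c) (hS' : IsMulOperator S' c') (h : c = c') : S = S' := by
  subst h
  ext f
  filter_upwards [hS f, hS' f] with x hx hx'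
  rw [hx, hx']

theorem isSelfAdjoint {S : Lp ℂ 2 μ →L[ℂ] Lp ℂ 2 μ} {r : E → ℝ}
    (hS : IsMulOperator S fun x => (r x : ℂ)) : IsSelfAdjoint S := by
  refine ContinuousLinearMap.isSelfAdjoint_iff_isSymmetric.mpr fun f f' => ?_
  rw [L2.inner_def, L2.inner_def]
  refine integral_congr_ae ?_
  filter_upwards [hS f, hS f'] with x hx hx'
  simp only [ContinuousLinearMap.coe_coe, hx, hx', RCLike.inner_apply, map_mul,
    Complex.conj_ofReal]
  ring

end IsMulOperator

end MeasureTheory.Lp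

theorem Btilde_positive_contraction_general {E : Type*} [MeasurableSpace E]
    (μ : Measure E)
    (K : Lp ℂ 2 μ →L[ℂ] Lp ℂ 2 μ)
    (hKpos : K.IsPositive) (hKcontr : ((1 : Lp ℂ 2 μ →L[ℂ] Lp ℂ 2 μ) - K).IsPositive)
    (g : E → ℝ) (hg : ∀ x, 0 ≤ g x ∧ g x ≤ 1)
    (Sg S1g T : Lp ℂ 2 μ →L[ℂ] Lp ℂ 2 μ)
    (hSg : ∀ f : Lp ℂ 2 μ, (Sg f : E → ℂ) =ᵐ[μ] fun x => (Real.sqrt (g x) : ℂ) * f x)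
    (hS1g : ∀ f : Lp ℂ 2 μ, (S1g f : E → ℂ) =ᵐ[μ] fun x => (Real.sqrt (1 - g x) : ℂ) * f x)
    (hT : ∀ f : Lp ℂ 2 μ, (T f : E → ℂ) =ᵐ[μ] fun x => ((g x : ℂ) - 1) * f x)
    (hinv1 : IsUnit ((1 : Lp ℂ 2 μ →L[ℂ] Lp ℂ 2 μ) - S1g ∘L K ∘L S1g)) :
    let B := Sg ∘L K ∘L Ring.inverse (1 + T ∘L K) ∘L Sg
    B.IsPositive ∧ ((1 : Lp ℂ 2 μ →L[ℂ] Lp ℂ 2 μ) - B).IsPositive := by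
  intro B
  have hsqrt (r : ℝ) (hr : 0 ≤ r) : (Real.sqrt r : ℂ) * Real.sqrt r = r := by
    rw [← Complex.ofReal_mul, Real.mul_self_sqrt hr]
  have hsum : Sg * Sg + S1g * S1g = 1 :=
    ((Lp.IsMulOperator.mul hSg hSg).add (Lp.IsMulOperator.mul hS1g hS1g)).eq
      Lp.IsMulOperator.one <| funext fun x => by
        simp only [Pi.add_apply, Pi.mul_apply, Pi.one_apply, hsqrt _ (hg x).1,
          hsqrt _ (sub_nonneg.mpr (hg x).2)]
        push_cast
        ring
  have hT_eq : T = -(S1g * S1g) :=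
    Lp.IsMulOperator.eq hT (Lp.IsMulOperator.mul hS1g hS1g).neg <| funext fun x => by
      simp only [Pi.neg_apply, Pi.mul_apply, hsqrt _ (sub_nonneg.mpr (hg x).2)]
      push_cast
      ring
  have hB : B = Sg * K * Ring.inverse (1 - S1g * S1g * K) * Sg := by
    simp only [B, ← ContinuousLinearMap.mul_def, hT_eq, neg_mul, ← sub_eq_add_neg, mul_assoc]
  obtain ⟨hB₀, hB₁⟩ := mul_mul_ringInverse_one_sub_mul_mem_Icc
    (Lp.IsMulOperator.isSelfAdjoint hSg) hsum (K.nonneg_iff_isPositive.mpr hKpos)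
    (sub_nonneg.mp (ContinuousLinearMap.nonneg_iff_isPositive _ |>.mpr hKcontr)) hinv1
  rw [← hB] at hB₀ hB₁
  exact ⟨B.nonneg_iff_isPositive.mp hB₀,
    (ContinuousLinearMap.nonneg_iff_isPositive _).mp (sub_nonneg.mpr hB₁)⟩

/-- Let `K` be a self-adjoint positive contraction on `L²(E,μ)`, locally of trace class,
and `g : E → [0,1]` measurable with `√(1-g) K √(1-g)` trace class and
`1 - √(1-g) K √(1-g)` invertible. Then `B̃(g,K) = √g K (1+(g-1)K)⁻¹ √g` is a
self-adjoint positive contraction, i.e. `0 ≤ B̃(g,K) ≤ 1`. -/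
theorem Btilde_positive_contraction {E : Type*} [MetricSpace E] [MeasurableSpace E]
    (μ : Measure E)
    (K : Lp ℂ 2 μ →L[ℂ] Lp ℂ 2 μ)
    (hKpos : K.IsPositive) (hKcontr : ((1 : Lp ℂ 2 μ →L[ℂ] Lp ℂ 2 μ) - K).IsPositive)
    (chi : Set E → (Lp ℂ 2 μ →L[ℂ] Lp ℂ 2 μ))
    (hchi : ∀ B : Set E, ∀ f : Lp ℂ 2 μ, (chi B f : E → ℂ) =ᵐ[μ] B.indicator f)
    (hKloc : ∀ B : Set E, Bornology.IsBounded B → MeasurableSet B →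
      traceNorm (chi B ∘L K ∘L chi B) < ⊤)
    (g : E → ℝ) (hgmeas : Measurable g) (hg : ∀ x, 0 ≤ g x ∧ g x ≤ 1)
    (Sg S1g T : Lp ℂ 2 μ →L[ℂ] Lp ℂ 2 μ)
    (hSg : ∀ f : Lp ℂ 2 μ, (Sg f : E → ℂ) =ᵐ[μ] fun x => (Real.sqrt (g x) : ℂ) * f x)
    (hS1g : ∀ f : Lp ℂ 2 μ, (S1g f : E → ℂ) =ᵐ[μ] fun x => (Real.sqrt (1 - g x) : ℂ) * f x)
    (hT : ∀ f : Lp ℂ 2 μ, (T f : E → ℂ) =ᵐ[μ] fun x => ((g x : ℂ) - 1) * f x)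
    (htrace : traceNorm (S1g ∘L K ∘L S1g) < ⊤)
    (hinv1 : IsUnit ((1 : Lp ℂ 2 μ →L[ℂ] Lp ℂ 2 μ) - S1g ∘L K ∘L S1g))
    (hinv2 : IsUnit (1 + T ∘L K)) :
    let B := Sg ∘L K ∘L Ring.inverse (1 + T ∘L K) ∘L Sg
    B.IsPositive ∧ ((1 : Lp ℂ 2 μ →L[ℂ] Lp ℂ 2 μ) - B).IsPositive :=
  Btilde_positive_contraction_general μ K hKpos hKcontr g hg Sg S1g T hSg hS1g hT hinv1
end
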